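/- For every vertex v at height k in the balancing formula of height h, under an assignment a ∈ {0,1}^{2^h}: v evaluates to 0 iff the number of 1-values among its 2^k descendant variables is 0; v evaluates to 1 iff it is 2^k; and v evaluates to P iff it is 2^{k−1}; in all other cases v evaluates to F (or has a descendant evaluating to F). -/

import Mathlib

/-!
Each of the values `0`, `1`, `P` of the balancing gate is produced only from children
carrying values of the same kind, so by induction on the height a vertex evaluates to `0`
exactly when all its leaves are `0`, to `1` exactly when all are `1`, and to `P` only when
each child subtree is either constant or itself balanced, which forces exactly half of the
leaves to be `1`. Any other count therefore leaves `F` as the only possible value.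
-/

/-- The 4-letter alphabet `Σ = {0, 1, P, F}` of the balancing formula. -/
inductive Sig4 where
  | zero | one | P | F
deriving DecidableEq

/-- The balancing gate. -/
def bgate : Sig4 → Sig4 → Sig4
  | .zero, .zero => .zero
  | .one, .one => .one
  | .one, .zero => .P
  | .zero, .one => .P
  | .P, .P => .P
  | _, _ => .F

/-- The value computed at the root of the balancing formula of height `h`
on the Boolean input `a` (read at positions `0, …, 2^h - 1`). -/
def balEval : ℕ → (ℕ → Bool) → Sig4
  | 0, a => if a 0 then .one else .zero
  | h + 1, a => bgate (balEval h a) (balEval h (fun i => a (i + 2 ^ h)))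

/-- The number of `1`-values among the first `m` positions of `a`. -/
def ones (m : ℕ) (a : ℕ → Bool) : ℕ :=
  ((Finset.range m).filter (fun j => a j = true)).card

lemma bgate_eq_zero_iff (x y : Sig4) : bgate x y = .zero ↔ x = .zero ∧ y = .zero := by
  cases x <;> cases y <;> decide

lemma bgate_eq_one_iff (x y : Sig4) : bgate x y = .one ↔ x = .one ∧ y = .one := by
  cases x <;> cases y <;> decide

lemma bgate_eq_P (x y : Sig4) (h : bgate x y = .P) :
    (x = .one ∧ y = .zero) ∨ (x = .zero ∧ y = .one) ∨ (x = .P ∧ y = .P) := by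
  cases x <;> cases y <;> simp_all [bgate]

lemma balEval_succ (k : ℕ) (a : ℕ → Bool) :
    balEval (k + 1) a = bgate (balEval k a) (balEval k (fun i => a (i + 2 ^ k))) :=
  rfl

lemma ones_one (a : ℕ → Bool) : ones 1 a = if a 0 then 1 else 0 := by
  cases h : a 0 <;> simp [ones, Finset.range_one, Finset.filter_singleton, h]

lemma ones_add (m n : ℕ) (a : ℕ → Bool) :
    ones (m + n) a = ones m a + ones n (fun i => a (i + m)) := by
  simp only [ones, Finset.card_filter, Finset.sum_range_add]
  simp only [Nat.add_comm m]

lemma ones_le (m : ℕ) (a : ℕ → Bool) : ones m a ≤ m :=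
  (Finset.card_filter_le _ _).trans (Finset.card_range m).le

lemma ones_two_pow_succ (k : ℕ) (a : ℕ → Bool) :
    ones (2 ^ (k + 1)) a = ones (2 ^ k) a + ones (2 ^ k) (fun i => a (i + 2 ^ k)) := by
  rw [pow_succ, Nat.mul_two, ones_add]

theorem balEval_eq_zero_iff (k : ℕ) (a : ℕ → Bool) :
    balEval k a = .zero ↔ ones (2 ^ k) a = 0 := by
  induction k generalizing a with
  | zero => cases h : a 0 <;> simp [balEval, ones_one, h]
  | succ k ih => rw [balEval_succ, bgate_eq_zero_iff, ih, ih, ones_two_pow_succ]; omega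

theorem balEval_eq_one_iff (k : ℕ) (a : ℕ → Bool) :
    balEval k a = .one ↔ ones (2 ^ k) a = 2 ^ k := by
  induction k generalizing a with
  | zero => cases h : a 0 <;> simp [balEval, ones_one, h]
  | succ k ih =>
    have := ones_le (2 ^ k) a
    have := ones_le (2 ^ k) (fun i => a (i + 2 ^ k))
    rw [balEval_succ, bgate_eq_one_iff, ih, ih, ones_two_pow_succ, pow_succ]
    omega

/-- Stated with `2 * ·` rather than `2 ^ (k - 1)`, this also covers height `0`, where it says
that a leaf never evaluates to `P`. -/
theorem two_mul_ones_of_balEval_eq_P {k : ℕ} {a : ℕ → Bool} (h : balEval k a = .P) :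
    2 * ones (2 ^ k) a = 2 ^ k := by
  induction k generalizing a with
  | zero => cases ha : a 0 <;> simp [balEval, ha] at h
  | succ k ih =>
    rw [balEval_succ] at h
    rw [ones_two_pow_succ, pow_succ]
    rcases bgate_eq_P _ _ h with ⟨hl, hr⟩ | ⟨hl, hr⟩ | ⟨hl, hr⟩
    · rw [(balEval_eq_one_iff k a).mp hl, (balEval_eq_zero_iff k _).mp hr]; ring
    · rw [(balEval_eq_zero_iff k a).mp hl, (balEval_eq_one_iff k _).mp hr]; ring
    · linarith [ih hl, ih hr]

/-- for a vertex at height `k ≥ 1` of the balancing formula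
(whose subtree reads `2^k` Boolean leaves `a 0, …, a (2^k - 1)`), provided no
`F` arises (i.e. the vertex itself does not evaluate to `F`), the vertex
evaluates to `0` iff the number of `1`-leaves is `0`, to `1` iff it is `2^k`,
and to `P` iff it is `2^{k-1}`; and if the count is none of these three values
then the vertex evaluates to `F`. -/
theorem balancing_level_characterization (k : ℕ) (hk : 1 ≤ k) (a : ℕ → Bool) :
    (balEval k a ≠ Sig4.F →
      ((balEval k a = Sig4.zero ↔ ones (2 ^ k) a = 0) ∧
       (balEval k a = Sig4.one ↔ ones (2 ^ k) a = 2 ^ k) ∧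
       (balEval k a = Sig4.P ↔ ones (2 ^ k) a = 2 ^ (k - 1)))) ∧
    (ones (2 ^ k) a ≠ 0 → ones (2 ^ k) a ≠ 2 ^ k → ones (2 ^ k) a ≠ 2 ^ (k - 1) →
      balEval k a = Sig4.F) := by
  have hsplit : 2 ^ k = 2 * 2 ^ (k - 1) := by rw [← pow_succ', Nat.sub_add_cancel hk]
  have hhalf_pos : 0 < 2 ^ (k - 1) := Nat.two_pow_pos _
  have hzero := balEval_eq_zero_iff k a
  have hone := balEval_eq_one_iff k a
  have hP : balEval k a = .P → ones (2 ^ k) a = 2 ^ (k - 1) := fun h => by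
    have := two_mul_ones_of_balEval_eq_P h
    omega
  refine ⟨fun hF => ⟨hzero, hone, hP, fun hn => ?_⟩, fun h0 h1 hhalf => ?_⟩
  · cases hv : balEval k a
    · have := hzero.mp hv; omega
    · have := hone.mp hv; omega
    · rfl
    · exact absurd hv hF
  · cases hv : balEval k a
    · exact absurd (hzero.mp hv) h0
    · exact absurd (hone.mp hv) h1
    · exact absurd (hP hv) hhalf
    · rfl
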